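/- Let K : [0,1]^{n_x} → ℝ^{n_u} be a continuous piecewise affine function (e.g., an explicit MPC law) all of whose components are nonnegative on [0,1]^{n_x}. Then there exist, for each i = 1, …, n_u, depths r_{γ,i}, r_{η,i} ≥ 1 and parameters θ_{γ,i}, θ_{η,i} of ReLU networks of width w = n_x + 1 and scalar output, such that for all x ∈ [0,1]^{n_x} and each i = 1, …, n_u, the i-th component of K satisfies K_i(x) = N(x;θ_{γ,i}, w, r_{γ,i}) − N(x;θ_{η,i}, w, r_{η,i}); that is, the vector of 2 n_u deep ReLU networks exactly represents K. -/

import Mathlib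

open Finset Matrix

/-- The affine map `x ↦ W x + b`. -/
def affineMapVec {m n : ℕ} (W : Matrix (Fin m) (Fin n) ℝ) (b : Fin m → ℝ)
    (x : Fin n → ℝ) : Fin m → ℝ :=
  fun i => (∑ j, W i j * x j) + b i

/-- Componentwise rectifier (ReLU). -/
def reluVec {n : ℕ} (v : Fin n → ℝ) : Fin n → ℝ := fun i => max 0 (v i)

/-- Parameters θ of a feed-forward ReLU network with `L ≥ 1` hidden layers of width `M`,
input dimension `nx` and output dimension `nu`:  the first hidden layer `(W1, b1)`,
the `L - 1` remaining hidden layers `(W l, b l)`, and the output layer `(Wout, bout)`. -/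
structure ReLUNetParams (nx nu M L : ℕ) where
  W1 : Matrix (Fin M) (Fin nx) ℝ
  b1 : Fin M → ℝ
  W : Fin (L - 1) → Matrix (Fin M) (Fin M) ℝ
  b : Fin (L - 1) → Fin M → ℝ
  Wout : Matrix (Fin nu) (Fin M) ℝ
  bout : Fin nu → ℝ

/-- The function `N(·; θ, M, L) = f_{L+1} ∘ g_L ∘ f_L ∘ ⋯ ∘ g_1 ∘ f_1` computed by the
ReLU network with parameters `θ`. -/
def ReLUNetParams.eval {nx nu M L : ℕ} (p : ReLUNetParams nx nu M L)
    (x : Fin nx → ℝ) : Fin nu → ℝ :=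
  affineMapVec p.Wout p.bout <|
    (List.finRange (L - 1)).foldl
      (fun ξ l => reluVec (affineMapVec (p.W l) (p.b l) ξ))
      (reluVec (affineMapVec p.W1 p.b1 x))

/-- A polyhedron `{x | Z x ≤ z}`. -/
def IsPolyhedron {n : ℕ} (S : Set (Fin n → ℝ)) : Prop :=
  ∃ (m : ℕ) (Z : Matrix (Fin m) (Fin n) ℝ) (z : Fin m → ℝ),
    S = {x | ∀ i, (∑ j, Z i j * x j) ≤ z i}

/-- `f` is piecewise affine on `D`: finitely many polyhedra with pairwise disjoint
interiors whose union is `D`, with `f` affine on each. -/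
def IsPWAOn {n m : ℕ} (D : Set (Fin n → ℝ)) (f : (Fin n → ℝ) → Fin m → ℝ) : Prop :=
  ∃ (r : ℕ) (R : Fin r → Set (Fin n → ℝ))
    (K : Fin r → Matrix (Fin m) (Fin n) ℝ) (g : Fin r → Fin m → ℝ),
    (∀ i, IsPolyhedron (R i)) ∧
    (∀ i j, i ≠ j → interior (R i) ∩ interior (R j) = ∅) ∧
    (⋃ i, R i) = D ∧
    (∀ i, ∀ x ∈ R i, f x = affineMapVec (K i) (g i) x)

/-- Scalar-valued piecewise affine function on `D`. -/
def IsPWAOnScalar {n : ℕ} (D : Set (Fin n → ℝ)) (f : (Fin n → ℝ) → ℝ) : Prop :=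
  ∃ (r : ℕ) (R : Fin r → Set (Fin n → ℝ)) (a : Fin r → Fin n → ℝ) (c : Fin r → ℝ),
    (∀ i, IsPolyhedron (R i)) ∧
    (∀ i j, i ≠ j → interior (R i) ∩ interior (R j) = ∅) ∧
    (⋃ i, R i) = D ∧
    (∀ i, ∀ x ∈ R i, f x = (∑ j, a i j * x j) + c i)

/-- `f` agrees with some affine function on the set `S`. -/
def AffineOnSet {n m : ℕ} (f : (Fin n → ℝ) → Fin m → ℝ) (S : Set (Fin n → ℝ)) : Prop :=
  ∃ (A : Matrix (Fin m) (Fin n) ℝ) (b : Fin m → ℝ), ∀ x ∈ S, f x = affineMapVec A b x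

/-- A linear region of `f`: a nonempty open connected set on which `f` is affine,
maximal with this property. -/
def IsLinearRegion {n m : ℕ} (f : (Fin n → ℝ) → Fin m → ℝ) (S : Set (Fin n → ℝ)) : Prop :=
  S.Nonempty ∧ IsOpen S ∧ IsConnected S ∧ AffineOnSet f S ∧
    ∀ S', IsOpen S' → IsConnected S' → S ⊂ S' → ¬ AffineOnSet f S'

/-- Maximum of a nonempty finite family of reals. -/
noncomputable def finMax {N : ℕ} (hN : 0 < N) (g : Fin N → ℝ) : ℝ :=
  Finset.univ.sup' (Finset.univ_nonempty_iff.mpr (Fin.pos_iff_nonempty.mp hN)) g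

/-- The unit hypercube `[0,1]^n`. -/
def unitCube (n : ℕ) : Set (Fin n → ℝ) := {x | ∀ i, 0 ≤ x i ∧ x i ≤ 1}

/-!
Fix a component `f = K i`. For any two points `x, z` of the convex domain some piece `ℓ_p`
satisfies `f x ≤ ℓ_p x` and `ℓ_p z ≤ f z`: on the segment `[x, z]` the function `f` is continuous
and piecewise affine in one variable, so `f - s t` is nondecreasing for the least slope `s` of a
nondegenerate piece, and that piece works. Hence `f = max_y min {ℓ_p | f y ≤ ℓ_p y}` on the domain,
and since `min = -max (-·)`, a max of mins of affine functions is a difference `F - G` of two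
max-affine functions (maxima of finitely many affine functions).

A max-affine function `max_k a_k` is computed on `[0,1]^n` by a ReLU network of width `n + 1`:
`n` units carry `x ≥ 0` unchanged and the last one holds the running maximum shifted by a
constant `C` with all `a_k + C ≥ 0` on the cube; each new `a_k` costs two layers,
`v ↦ max 0 (v - (a_k + C))` and `u ↦ max 0 (u + (a_k + C))`, which yield `max v (a_k + C)`.
-/

open Set Filter Topology

theorem Finset.neg_sup'_neg {ι α : Type*} [AddCommGroup α] [LinearOrder α] [IsOrderedAddMonoid α]
    (s : Finset ι) (hs : s.Nonempty) (f : ι → α) : -(s.sup' hs fun i ↦ -f i) = s.inf' hs f :=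
  le_antisymm (le_inf' _ _ fun _ hi ↦ neg_le.1 (le_sup' (fun i ↦ -f i) hi))
    (le_neg.2 (sup'_le _ _ fun _ hi ↦ neg_le_neg (inf'_le _ hi)))

section MaxAffine

variable {E : Type*} [AddCommGroup E] [Module ℝ E]

def IsMaxAffine (F : E → ℝ) : Prop :=
  ∃ (A : Finset (E →ᵃ[ℝ] ℝ)) (hA : A.Nonempty), ∀ x, F x = A.sup' hA (· x)

theorem AffineMap.isMaxAffine (a : E →ᵃ[ℝ] ℝ) : IsMaxAffine a :=
  ⟨{a}, singleton_nonempty a, fun x ↦ by simp⟩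

theorem IsMaxAffine.sup {F G : E → ℝ} (hF : IsMaxAffine F) (hG : IsMaxAffine G) :
    IsMaxAffine (F ⊔ G) := by
  classical
  obtain ⟨A, hA, hFA⟩ := hF
  obtain ⟨B, hB, hGB⟩ := hG
  exact ⟨A ∪ B, hA.mono subset_union_left, fun x ↦ by simp [hFA, hGB, sup'_union hA hB]⟩

theorem IsMaxAffine.add {F G : E → ℝ} (hF : IsMaxAffine F) (hG : IsMaxAffine G) :
    IsMaxAffine (F + G) := by
  classical
  obtain ⟨A, hA, hFA⟩ := hF
  obtain ⟨B, hB, hGB⟩ := hG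
  refine ⟨image₂ (· + ·) A B, hA.image₂ hB, fun x ↦ ?_⟩
  rw [Pi.add_apply, hFA, hGB, sup'_image₂_left, sup'_add]
  exact sup'_congr hA rfl fun a _ ↦ by rw [add_sup']; rfl

theorem isMaxAffine_finset_sup' {κ : Type*} {s : Finset κ} (hs : s.Nonempty) {F : κ → E → ℝ}
    (hF : ∀ k ∈ s, IsMaxAffine (F k)) : IsMaxAffine (s.sup' hs F) :=
  sup'_induction hs F (fun _ h₁ _ h₂ ↦ h₁.sup h₂) hF

theorem isMaxAffine_finset_sum {κ : Type*} {s : Finset κ} {F : κ → E → ℝ}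
    (hF : ∀ k ∈ s, IsMaxAffine (F k)) : IsMaxAffine (∑ k ∈ s, F k) :=
  sum_induction F IsMaxAffine (fun _ _ h₁ h₂ ↦ h₁.add h₂) (0 : E →ᵃ[ℝ] ℝ).isMaxAffine hF

/-- With `c_k = max_{p ∈ t k} (-ℓ_p) = -min_{p ∈ t k} ℓ_p`, take `G = ∑_k c_k` and
`F = max_k ∑_{k' ≠ k} c_{k'} = G + max_k (-c_k)`. -/
theorem exists_isMaxAffine_sub_eq_sup'_inf' {κ ι : Type*} (s : Finset κ) (hs : s.Nonempty)
    (t : κ → Finset ι) (ht : ∀ k, (t k).Nonempty) (ℓ : ι → E →ᵃ[ℝ] ℝ) :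
    ∃ F G, IsMaxAffine F ∧ IsMaxAffine G ∧
      ∀ x, s.sup' hs (fun k ↦ (t k).inf' (ht k) (ℓ · x)) = F x - G x := by
  classical
  let c : κ → E → ℝ := fun k ↦ (t k).sup' (ht k) fun p ↦ ⇑(-ℓ p)
  have hc : ∀ k, IsMaxAffine (c k) := fun k ↦
    isMaxAffine_finset_sup' (ht k) fun p _ ↦ (-ℓ p).isMaxAffine
  refine ⟨s.sup' hs fun k ↦ ∑ k' ∈ s.erase k, c k', ∑ k ∈ s, c k,
    isMaxAffine_finset_sup' hs fun k _ ↦ isMaxAffine_finset_sum fun k' _ ↦ hc k',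
    isMaxAffine_finset_sum fun k _ ↦ hc k, fun x ↦ ?_⟩
  rw [Finset.sup'_apply, sub_eq_add_neg, sup'_add]
  refine sup'_congr hs rfl fun k hk ↦ ?_
  have hck : c k x = (t k).sup' (ht k) fun p ↦ -ℓ p x := by simp [c, Finset.sup'_apply]
  rw [sum_erase_eq_sub hk, Pi.sub_apply, ← neg_sup'_neg, hck]
  ring

end MaxAffine

theorem exists_mem_and_gt_of_isClosed_cover {ι : Type*} [Finite ι] {J : ι → Set ℝ}
    (hJc : ∀ p, IsClosed (J p)) {a b : ℝ} (hcover : Set.Icc a b ⊆ ⋃ p, J p) {t : ℝ}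
    (ht : t ∈ Set.Ico a b) : ∃ p, t ∈ J p ∧ ∃ u ∈ J p, t < u := by
  set U := ⋃ (p) (_ : t ∉ J p), J p
  have hU : ∀ᶠ u in 𝓝[>] t, u ∉ U := by
    refine mem_nhdsWithin_of_mem_nhds ((isClosed_iUnion_of_finite fun p ↦
      isClosed_iUnion_of_finite fun _ ↦ hJc p).isOpen_compl.mem_nhds ?_)
    simp +contextual
  have hIco : ∀ᶠ u in 𝓝[>] t, u ∈ Set.Ico t b := Ico_mem_nhdsGT ht.2
  have hgt : ∀ᶠ u in 𝓝[>] t, t < u := self_mem_nhdsWithin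
  obtain ⟨u, huU, hu, htu⟩ := (hU.and (hIco.and hgt)).exists
  obtain ⟨p, hp⟩ := mem_iUnion.1 (hcover ⟨ht.1.trans hu.1, hu.2.le⟩)
  by_contra! h
  exact huU (mem_biUnion (fun htp ↦ (h p htp u hp).not_gt htu) hp)

theorem monotoneOn_of_piecewise_slope_nonneg {ι : Type*} [Finite ι] {J : ι → Set ℝ}
    (hJc : ∀ p, IsClosed (J p)) (hJv : ∀ p, Convex ℝ (J p)) {a b : ℝ}
    (hcover : Set.Icc a b ⊆ ⋃ p, J p) {h : ℝ → ℝ} (hh : ContinuousOn h (Set.Icc a b))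
    {α σ : ι → ℝ} (hα : ∀ p, ∀ t ∈ J p, h t = α p + σ p * t)
    (hσ : ∀ p, (J p).Nontrivial → 0 ≤ σ p) : MonotoneOn h (Set.Icc a b) := by
  intro t₁ ht₁ t₂ ht₂ h₁₂
  have hsub : Set.Icc t₁ t₂ ⊆ Set.Icc a b := Icc_subset_Icc ht₁.1 ht₂.2
  suffices Set.Icc t₁ t₂ ⊆ {t | h t₁ ≤ h t} from this ⟨h₁₂, le_rfl⟩
  refine IsClosed.Icc_subset_of_forall_exists_gt ?_ (le_refl (h t₁)) fun t ht y hy ↦ ?_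
  · rw [inter_comm]
    exact (hh.mono hsub).preimage_isClosed_of_isClosed isClosed_Icc isClosed_Ici
  obtain ⟨p, htp, u, hup, htu⟩ := exists_mem_and_gt_of_isClosed_cover hJc hcover
    ⟨ht₁.1.trans ht.2.1, ht.2.2.trans_le ht₂.2⟩
  have hv : min u y ∈ J p :=
    (convex_iff_ordConnected.1 (hJv p)).out htp hup ⟨(lt_min htu hy).le, min_le_left _ _⟩
  refine ⟨min u y, ?_, lt_min htu hy, min_le_right _ _⟩
  have hslope := hσ p ⟨t, htp, u, hup, htu.ne⟩
  have : h t ≤ h (min u y) := by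
    rw [hα p t htp, hα p _ hv]
    nlinarith [lt_min htu hy]
  exact ht.1.trans this

theorem exists_piece_ge_at_zero_le_at_one {ι : Type*} [Finite ι] {J : ι → Set ℝ}
    (hJc : ∀ p, IsClosed (J p)) (hJv : ∀ p, Convex ℝ (J p)) (hJsub : ∀ p, J p ⊆ Set.Icc 0 1)
    (hcover : Set.Icc 0 1 ⊆ ⋃ p, J p) {h : ℝ → ℝ} (hh : ContinuousOn h (Set.Icc 0 1))
    {α σ : ι → ℝ} (hα : ∀ p, ∀ t ∈ J p, h t = α p + σ p * t) :
    ∃ p, h 0 ≤ α p ∧ α p + σ p ≤ h 1 := by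
  obtain ⟨p₁, h0p₁, u, hup₁, h0u⟩ :=
    exists_mem_and_gt_of_isClosed_cover hJc hcover (left_mem_Ico.2 one_pos)
  -- Among the pieces that are not points, take one of least slope `σ p₀`;
  -- then `h t - σ p₀ * t` is nondecreasing.
  obtain ⟨p₀, hp₀, hmin⟩ := exists_min_image {p | (J p).Nontrivial} σ (toFinite _)
    ⟨p₁, 0, h0p₁, u, hup₁, h0u.ne⟩
  have hmono : MonotoneOn (fun t ↦ h t - σ p₀ * t) (Set.Icc 0 1) :=
    monotoneOn_of_piecewise_slope_nonneg hJc hJv hcover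
      (hh.sub (continuousOn_const.mul continuousOn_id))
      (σ := fun p ↦ σ p - σ p₀) (fun p t ht ↦ by rw [hα p t ht]; ring)
      fun p hp ↦ sub_nonneg.2 (hmin p hp)
  obtain ⟨a, ha⟩ := hp₀.nonempty
  have h0a := hmono (left_mem_Icc.2 zero_le_one) (hJsub p₀ ha) (hJsub p₀ ha).1
  have ha1 := hmono (hJsub p₀ ha) (right_mem_Icc.2 zero_le_one) (hJsub p₀ ha).2
  simp only [hα p₀ a ha] at h0a ha1
  exact ⟨p₀, by linarith, by linarith⟩

section Piecewise

variable {E : Type*} [AddCommGroup E] [Module ℝ E] [TopologicalSpace E]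
  [IsTopologicalAddGroup E] [ContinuousSMul ℝ E] {ι : Type*} [Finite ι] {D : Set E}
  {R : ι → Set E} {ℓ : ι → E →ᵃ[ℝ] ℝ} {f : E → ℝ}

theorem exists_piece_ge_le (hD : Convex ℝ D) (hRc : ∀ p, IsClosed (R p))
    (hRv : ∀ p, Convex ℝ (R p)) (hcover : D ⊆ ⋃ p, R p) (hf : ContinuousOn f D)
    (hℓ : ∀ p, ∀ x ∈ D, x ∈ R p → f x = ℓ p x) {x z : E} (hx : x ∈ D) (hz : z ∈ D) :
    ∃ p, f x ≤ ℓ p x ∧ ℓ p z ≤ f z := by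
  set γ : ℝ →ᵃ[ℝ] E := AffineMap.lineMap x z
  have hγD : ∀ t ∈ Set.Icc (0 : ℝ) 1, γ t ∈ D := fun t ht ↦ hD.lineMap_mem hx hz ht
  obtain ⟨p, h0, h1⟩ := exists_piece_ge_at_zero_le_at_one (J := fun p ↦ Set.Icc 0 1 ∩ γ ⁻¹' R p)
    (fun p ↦ isClosed_Icc.inter ((hRc p).preimage AffineMap.lineMap_continuous))
    (fun p ↦ (convex_Icc 0 1).inter ((hRv p).affine_preimage γ)) (fun p ↦ inter_subset_left)
    (fun t ht ↦ by simpa [ht] using hcover (hγD t ht))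
    (hf.comp AffineMap.lineMap_continuous.continuousOn hγD) (α := fun p ↦ ℓ p x)
    (σ := fun p ↦ ℓ p z - ℓ p x) fun p t ht ↦ by
      rw [Function.comp_apply, hℓ p _ (hγD t ht.1) ht.2, AffineMap.apply_lineMap,
        AffineMap.lineMap_apply_ring']
      ring
  simp only [Function.comp_apply, AffineMap.lineMap_apply_zero, AffineMap.lineMap_apply_one]
    at h0 h1
  exact ⟨p, h0, by linarith⟩

theorem exists_isMaxAffine_sub_of_piecewise (hD : Convex ℝ D) (hRc : ∀ p, IsClosed (R p))
    (hRv : ∀ p, Convex ℝ (R p)) (hcover : D ⊆ ⋃ p, R p) (hf : ContinuousOn f D)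
    (hℓ : ∀ p, ∀ x ∈ D, x ∈ R p → f x = ℓ p x) :
    ∃ F G, IsMaxAffine F ∧ IsMaxAffine G ∧ ∀ x ∈ D, f x = F x - G x := by
  classical
  cases nonempty_fintype ι
  rcases D.eq_empty_or_nonempty with rfl | ⟨y₀, hy₀⟩
  · exact ⟨_, _, (0 : E →ᵃ[ℝ] ℝ).isMaxAffine, (0 : E →ᵃ[ℝ] ℝ).isMaxAffine, by simp⟩
  -- `f` is the maximum over `y ∈ D` of the minimum of the pieces lying above `f` at `y`.
  let T : D → Finset ι := fun y ↦ {p | f y ≤ ℓ p y}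
  have hT : ∀ S : range T, (S : Finset ι).Nonempty := by
    rintro ⟨_, y, rfl⟩
    obtain ⟨p, hp⟩ := mem_iUnion.1 (hcover y.2)
    exact ⟨p, by simp [T, hℓ p y y.2 hp]⟩
  have : Fintype (range T) := Fintype.ofFinite _
  obtain ⟨F, G, hF, hG, hFG⟩ := exists_isMaxAffine_sub_eq_sup'_inf' Finset.univ
    ⟨⟨_, ⟨y₀, hy₀⟩, rfl⟩, Finset.mem_univ _⟩ (fun S : range T ↦ (S : Finset ι)) hT ℓ
  refine ⟨F, G, hF, hG, fun x hx ↦ le_antisymm ?_ ?_ |>.trans (hFG x)⟩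
  · refine le_trans ?_ (le_sup' _ (Finset.mem_univ ⟨T ⟨x, hx⟩, _, rfl⟩))
    exact le_inf' _ _ fun p hp ↦ (mem_filter.1 hp).2
  · refine sup'_le _ _ fun ⟨_, y, hy⟩ _ ↦ ?_
    obtain ⟨p, hyp, hpx⟩ := exists_piece_ge_le hD hRc hRv hcover hf hℓ y.2 hx
    exact (inf'_le _ (by simpa [← hy, T] using hyp)).trans hpx

end Piecewise

section Network

variable {n : ℕ}

def affineRow (a : (Fin n → ℝ) →ᵃ[ℝ] ℝ) : Fin n → ℝ := fun j ↦ a.linear (Pi.single j 1)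

theorem sum_affineRow_mul_add (a : (Fin n → ℝ) →ᵃ[ℝ] ℝ) (x : Fin n → ℝ) :
    ∑ j, affineRow a j * x j + a 0 = a x := by
  conv_rhs => rw [a.decomp, Pi.add_apply, pi_eq_sum_univ' x, map_sum]
  simp [affineRow, mul_comm]

theorem affineMapVec_snoc {m : ℕ} (W : Fin m → Fin n → ℝ) (w : Fin n → ℝ) (b : Fin m → ℝ)
    (c : ℝ) (x : Fin n → ℝ) :
    affineMapVec (Matrix.of (Fin.snoc W w)) (Fin.snoc b c) x =
      Fin.snoc (affineMapVec (Matrix.of W) b x) (∑ j, w j * x j + c) := by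
  ext i
  induction i using Fin.lastCases <;> simp [affineMapVec]

theorem affineMapVec_single {m : ℕ} (f : Fin m → Fin n) (x : Fin n → ℝ) :
    affineMapVec (Matrix.of fun i ↦ Pi.single (f i) 1) 0 x = fun i ↦ x (f i) := by
  ext i
  simp [affineMapVec, Pi.single_apply]

theorem reluVec_snoc {m : ℕ} (u : Fin m → ℝ) (c : ℝ) :
    reluVec (Fin.snoc u c : Fin (m + 1) → ℝ) = Fin.snoc (reluVec u) (max 0 c) := by
  ext i
  induction i using Fin.lastCases <;> simp [reluVec]

theorem reluVec_of_nonneg {x : Fin n → ℝ} (hx : 0 ≤ x) : reluVec x = x :=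
  funext fun i ↦ max_eq_right (hx i)

/-- Its hidden states are `Fin.snoc x v`: the first `n` units pass the input `x ≥ 0` through, the
last one holds `v = max 0 (q₀ x)`, then `max 0 (v + q x)` for each `q ∈ qs` in turn; the output
is `v + d`. -/
noncomputable def accumulatorNet (q₀ : (Fin n → ℝ) →ᵃ[ℝ] ℝ) (qs : List ((Fin n → ℝ) →ᵃ[ℝ] ℝ))
    (d : ℝ) : ReLUNetParams n 1 (n + 1) (qs.length + 1) where
  W1 := Matrix.of (Fin.snoc (fun i ↦ Pi.single i 1) (affineRow q₀))
  b1 := Fin.snoc 0 (q₀ 0)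
  W l := Matrix.of (Fin.snoc (fun i ↦ Pi.single i.castSucc 1) (Fin.snoc (affineRow (qs.get l)) 1))
  b l := Fin.snoc 0 (qs.get l 0)
  Wout := Matrix.of fun _ ↦ Fin.snoc 0 1
  bout _ := d

theorem accumulatorNet_eval (q₀ : (Fin n → ℝ) →ᵃ[ℝ] ℝ) (qs : List ((Fin n → ℝ) →ᵃ[ℝ] ℝ)) (d : ℝ)
    {x : Fin n → ℝ} (hx : 0 ≤ x) :
    (accumulatorNet q₀ qs d).eval x 0 =
      qs.foldl (fun v q ↦ max 0 (v + q x)) (max 0 (q₀ x)) + d := by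
  have hstep (v : ℝ) (l : Fin (qs.length + 1 - 1)) :
      reluVec (affineMapVec ((accumulatorNet q₀ qs d).W l) ((accumulatorNet q₀ qs d).b l)
        (Fin.snoc x v)) = Fin.snoc x (max 0 (v + qs.get l x)) := by
    rw [accumulatorNet, affineMapVec_snoc, affineMapVec_single, reluVec_snoc]
    simp only [Fin.snoc_castSucc, reluVec_of_nonneg hx, Fin.sum_univ_castSucc, Fin.snoc_last,
      one_mul]
    rw [← sum_affineRow_mul_add (qs.get l) x]
    congr 2
    ring
  have hfirst : reluVec (affineMapVec (accumulatorNet q₀ qs d).W1 (accumulatorNet q₀ qs d).b1 x) =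
      Fin.snoc x (max 0 (q₀ x)) := by
    rw [accumulatorNet, affineMapVec_snoc, affineMapVec_single (fun i ↦ i), reluVec_snoc,
      reluVec_of_nonneg hx, sum_affineRow_mul_add]
  rw [ReLUNetParams.eval, hfirst, List.foldl_hom (Fin.snoc x)
    (g₁ := fun v (l : Fin (qs.length + 1 - 1)) ↦ max 0 (v + qs.get l x))
    (g₂ := fun ξ l ↦ reluVec (affineMapVec ((accumulatorNet q₀ qs d).W l)
      ((accumulatorNet q₀ qs d).b l) ξ)) hstep]
  conv_rhs => rw [← List.map_get_finRange qs, List.foldl_map]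
  simp [accumulatorNet, affineMapVec, Fin.sum_univ_castSucc]

end Network

theorem max_zero_max_zero_sub_add {v g : ℝ} (hg : 0 ≤ g) :
    max 0 (max 0 (v - g) + g) = max v g := by
  rw [← max_add_add_right, zero_add, sub_add_cancel, max_eq_right (hg.trans (le_max_left _ _)),
    max_comm]

theorem exists_foldl_eq_sup'_add {E : Type*} [AddCommGroup E] [Module ℝ E] {D : Set E} {C : ℝ}
    {s : Finset (E →ᵃ[ℝ] ℝ)} (hs : s.Nonempty) (hC : ∀ a ∈ s, ∀ x ∈ D, 0 ≤ a x + C) :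
    ∃ (q₀ : E →ᵃ[ℝ] ℝ) (qs : List (E →ᵃ[ℝ] ℝ)), ∀ x ∈ D,
      qs.foldl (fun v q ↦ max 0 (v + q x)) (max 0 (q₀ x)) = s.sup' hs (· x) + C := by
  induction hs using Finset.Nonempty.cons_induction with
  | singleton a =>
    refine ⟨a + AffineMap.const ℝ E C, [], fun x hx ↦ ?_⟩
    simpa using hC a (Finset.mem_singleton_self a) x hx
  | cons a s ha hs ih =>
    obtain ⟨q₀, qs, hqs⟩ := ih fun b hb ↦ hC b (Finset.mem_cons_of_mem hb)
    let g := a + AffineMap.const ℝ E C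
    refine ⟨q₀, qs ++ [-g, g], fun x hx ↦ ?_⟩
    have hg : 0 ≤ g x := by simpa [g] using hC a (Finset.mem_cons_self a s) x hx
    rw [List.foldl_append, hqs x hx, Finset.sup'_cons hs]
    simp only [List.foldl_cons, List.foldl_nil, AffineMap.coe_neg, Pi.neg_apply, ← sub_eq_add_neg,
      max_zero_max_zero_sub_add hg]
    simp [g, max_comm, max_add_add_right]

theorem IsMaxAffine.exists_reluNet {n : ℕ} {F : (Fin n → ℝ) → ℝ} (hF : IsMaxAffine F)
    {D : Set (Fin n → ℝ)} (hD : IsCompact D) (hD₀ : ∀ x ∈ D, 0 ≤ x) :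
    ∃ L, 1 ≤ L ∧ ∃ θ : ReLUNetParams n 1 (n + 1) L, ∀ x ∈ D, θ.eval x 0 = F x := by
  obtain ⟨A, hA, hFA⟩ := hF
  obtain ⟨m, hm⟩ : BddBelow (⋃ a ∈ (A : Set ((Fin n → ℝ) →ᵃ[ℝ] ℝ)), a '' D) :=
    A.finite_toSet.bddBelow_biUnion.2 fun a _ ↦
      hD.bddBelow_image a.continuous_of_finiteDimensional.continuousOn
  obtain ⟨q₀, qs, hqs⟩ := exists_foldl_eq_sup'_add hA (C := -m) fun a ha x hx ↦ by
    linarith [hm (mem_biUnion (Finset.mem_coe.2 ha) (mem_image_of_mem a hx))]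
  exact ⟨qs.length + 1, by omega, accumulatorNet q₀ qs m, fun x hx ↦ by
    rw [accumulatorNet_eval _ _ _ (hD₀ x hx), hqs x hx, hFA]; ring⟩

theorem IsPolyhedron.eq_preimage {n : ℕ} {S : Set (Fin n → ℝ)} (h : IsPolyhedron S) :
    ∃ (m : ℕ) (Z : Matrix (Fin m) (Fin n) ℝ) (z : Fin m → ℝ), S = Z.mulVecLin ⁻¹' Iic z := by
  obtain ⟨m, Z, z, rfl⟩ := h
  exact ⟨m, Z, z, rfl⟩

theorem IsPolyhedron.isClosed {n : ℕ} {S : Set (Fin n → ℝ)} (h : IsPolyhedron S) :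
    IsClosed S := by
  obtain ⟨m, Z, z, rfl⟩ := h.eq_preimage
  exact isClosed_Iic.preimage (LinearMap.continuous_of_finiteDimensional _)

theorem IsPolyhedron.convex {n : ℕ} {S : Set (Fin n → ℝ)} (h : IsPolyhedron S) : Convex ℝ S := by
  obtain ⟨m, Z, z, rfl⟩ := h.eq_preimage
  exact (convex_Iic z).linear_preimage _

theorem IsPWAOn.exists_isMaxAffine_sub {n m : ℕ} {D : Set (Fin n → ℝ)} (hD : Convex ℝ D)
    {K : (Fin n → ℝ) → Fin m → ℝ} (hpwa : IsPWAOn D K) (hcont : ContinuousOn K D) (i : Fin m) :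
    ∃ F G, IsMaxAffine F ∧ IsMaxAffine G ∧ ∀ x ∈ D, K x i = F x - G x := by
  obtain ⟨r, R, W, b, hpoly, -, hcover, haff⟩ := hpwa
  exact exists_isMaxAffine_sub_of_piecewise hD (fun p ↦ (hpoly p).isClosed)
    (fun p ↦ (hpoly p).convex) hcover.ge ((continuous_apply i).comp_continuousOn hcont)
    (ℓ := fun p ↦ (LinearMap.proj i ∘ₗ (W p).mulVecLin).toAffineMap + AffineMap.const ℝ _ (b p i))
    fun p x _ hx ↦ by rw [haff p x hx]; rfl

theorem unitCube_eq_Icc (n : ℕ) : unitCube n = Set.Icc 0 1 := by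
  ext x
  simp [unitCube, forall_and, Pi.le_def]

theorem mpc_law_exact_relu_representation_general (nx nu : ℕ) (K : (Fin nx → ℝ) → Fin nu → ℝ)
    (hcont : ContinuousOn K (unitCube nx))
    (hpwa : IsPWAOn (unitCube nx) K) :
    ∃ (rγ rη : Fin nu → ℕ), (∀ i, 1 ≤ rγ i) ∧ (∀ i, 1 ≤ rη i) ∧
      ∃ (θγ : ∀ i, ReLUNetParams nx 1 (nx + 1) (rγ i))
        (θη : ∀ i, ReLUNetParams nx 1 (nx + 1) (rη i)),
        ∀ x ∈ unitCube nx, ∀ i, K x i = (θγ i).eval x 0 - (θη i).eval x 0 := by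
  rw [unitCube_eq_Icc] at *
  have hnet (i : Fin nu) : ∃ (Lγ Lη : ℕ) (_ : 1 ≤ Lγ) (_ : 1 ≤ Lη)
      (θγ : ReLUNetParams nx 1 (nx + 1) Lγ) (θη : ReLUNetParams nx 1 (nx + 1) Lη),
      ∀ x ∈ Set.Icc 0 1, K x i = θγ.eval x 0 - θη.eval x 0 := by
    obtain ⟨F, G, hF, hG, hFG⟩ := hpwa.exists_isMaxAffine_sub (convex_Icc 0 1) hcont i
    obtain ⟨Lγ, hLγ, θγ, hγ⟩ := hF.exists_reluNet isCompact_Icc fun x hx ↦ hx.1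
    obtain ⟨Lη, hLη, θη, hη⟩ := hG.exists_reluNet isCompact_Icc fun x hx ↦ hx.1
    exact ⟨Lγ, Lη, hLγ, hLη, θγ, θη, fun x hx ↦ by rw [hγ x hx, hη x hx, hFG x hx]⟩
  choose rγ rη hrγ hrη θγ θη hθ using hnet
  exact ⟨rγ, rη, hrγ, hrη, θγ, θη, fun x hx i ↦ hθ i x hx⟩

/-- a continuous PWA map `K : [0,1]^{nx} → ℝ^{nu}` with nonnegative components
is exactly represented componentwise by `2 nu` ReLU networks of width `nx + 1`. -/
theorem mpc_law_exact_relu_representation (nx nu : ℕ) (K : (Fin nx → ℝ) → Fin nu → ℝ)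
    (hcont : ContinuousOn K (unitCube nx))
    (hpwa : IsPWAOn (unitCube nx) K)
    (hnonneg : ∀ x ∈ unitCube nx, ∀ i, 0 ≤ K x i) :
    ∃ (rγ rη : Fin nu → ℕ), (∀ i, 1 ≤ rγ i) ∧ (∀ i, 1 ≤ rη i) ∧
      ∃ (θγ : ∀ i, ReLUNetParams nx 1 (nx + 1) (rγ i))
        (θη : ∀ i, ReLUNetParams nx 1 (nx + 1) (rη i)),
        ∀ x ∈ unitCube nx, ∀ i, K x i = (θγ i).eval x 0 - (θη i).eval x 0 :=
  mpc_law_exact_relu_representation_general nx nu K hcont hpwa
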